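/- Let V be a finite vertex set, d, m ≥ 1, and let Ã : V × V → ℝ be a matrix with nonnegative entries. Fix c_σ, w, β_E, β_L ≥ 0. Let σ : ℝ^d → ℝ^d be differentiable with ‖Dσ(y)‖ ≤ c_σ for all y, for each layer index ℓ ∈ ℕ let W^(ℓ) : ℝ^d → ℝ^d be a linear map with operator norm ‖W^(ℓ)‖ ≤ w, and for each node i ∈ V and layer ℓ let E_{i,ℓ} : ℝ^d → ℝ^d and L_{i,ℓ} : ℝ^d → ℝ^d be differentiable maps with ‖DE_{i,ℓ}(y)‖ ≤ β_E and ‖DL_{i,ℓ}(y)‖ ≤ β_L for all y. Define layer maps F^(ℓ) : (V → ℝ^d) → (V → ℝ^d) by F^(ℓ)(x)_i = σ(E_{i,ℓ}(∑_{z ∈ V} Ã_{iz} W^(ℓ)(L_{i,ℓ}(x_z)))), and set X^(ℓ) = F^(ℓ-1) ∘ ⋯ ∘ F^(0). Then for every ℓ ≥ 0, every x : V → ℝ^d, and all i, j ∈ V, the operator norm of the block of the total derivative of X^(ℓ) at x sending variations of the j-th input coordinate to the i-th output coordinate (i.e. the norm of π_i ∘ DX^(ℓ)(x) ∘ ι_j,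 where ι_j : ℝ^d → (V → ℝ^d) inserts a vector at coordinate j and π_i projects to coordinate i) is at most c_σ^ℓ w^ℓ (β_E β_L)^ℓ (Ã^ℓ)_{ij}. -/

import Mathlib

/-!
Write `D(X ℓ)(x)` as a `V × V` matrix of blocks `π_i ∘ D(X ℓ)(x) ∘ ι_j`. By the chain rule the
block matrix of a composite is the product of the block matrices, so the operator norms of the
blocks are dominated entrywise by the product of the two matrices of norm bounds. The `(i, z)`
block of one layer's derivative is `Ã i z • Dσ ∘ DE ∘ W ∘ DL`, of norm at most
`cσ βE w βL Ã i z`; iterating over `ℓ` layers gives `(cσ βE w βL)^ℓ (Ã^ℓ) i j`.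
-/

open ContinuousLinearMap in
/-- The coordinate insertion map `ι_j : ℝ^d → (V → ℝ^d)` placing a vector at
coordinate `j` and `0` elsewhere, as a continuous linear map. -/
noncomputable def coordIncl {V : Type*} [DecidableEq V] (E : Type*)
    [NormedAddCommGroup E] [NormedSpace ℝ E] (j : V) : E →L[ℝ] (V → E) :=
  ContinuousLinearMap.pi (fun z => if z = j then ContinuousLinearMap.id ℝ E else 0)

section NormBounds

variable {E F G : Type*} [NormedAddCommGroup E] [NormedSpace ℝ E] [NormedAddCommGroup F]
  [NormedSpace ℝ F] [NormedAddCommGroup G] [NormedSpace ℝ G]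

theorem ContinuousLinearMap.norm_comp_le_of_le {g : F →L[ℝ] G} {f : E →L[ℝ] F} {a b : ℝ}
    (hg : ‖g‖ ≤ a) (hf : ‖f‖ ≤ b) : ‖g.comp f‖ ≤ a * b :=
  (g.opNorm_comp_le f).trans <| mul_le_mul hg hf (norm_nonneg _) ((norm_nonneg _).trans hg)

theorem norm_fderiv_comp_le {g : F → G} {f : E → F} {x : E} {a b : ℝ}
    (hg : DifferentiableAt ℝ g (f x)) (hf : DifferentiableAt ℝ f x)
    (hga : ‖fderiv ℝ g (f x)‖ ≤ a) (hfb : ‖fderiv ℝ f x‖ ≤ b) :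
    ‖fderiv ℝ (g ∘ f) x‖ ≤ a * b := by
  rw [fderiv_comp x hg hf]
  exact ContinuousLinearMap.norm_comp_le_of_le hga hfb

end NormBounds

section MessagePassing

variable {V : Type*} [Fintype V] {E : Type*} [NormedAddCommGroup E] [NormedSpace ℝ E]

def messagePassing (A : Matrix V V ℝ) (φ ψ : V → E → E) (x : V → E) : V → E :=
  fun i => φ i (∑ z, A i z • ψ i (x z))

variable {A : Matrix V V ℝ} {φ ψ : V → E → E}

theorem hasFDerivAt_messagePassing_apply (hφ : ∀ i, Differentiable ℝ (φ i))
    (hψ : ∀ i, Differentiable ℝ (ψ i)) (x : V → E) (i : V) :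
    HasFDerivAt (fun y => messagePassing A φ ψ y i)
      ((fderiv ℝ (φ i) (∑ z, A i z • ψ i (x z))).comp
        (∑ z, A i z • (fderiv ℝ (ψ i) (x z)).comp
          (ContinuousLinearMap.proj (R := ℝ) (φ := fun _ : V => E) z))) x := by
  refine (hφ i _).hasFDerivAt.comp x (HasFDerivAt.fun_sum fun z _ => ?_)
  exact ((hψ i _).hasFDerivAt.comp x (hasFDerivAt_apply z x)).const_smul (A i z)

theorem differentiable_messagePassing (hφ : ∀ i, Differentiable ℝ (φ i))
    (hψ : ∀ i, Differentiable ℝ (ψ i)) : Differentiable ℝ (messagePassing A φ ψ) :=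
  differentiable_pi.2 fun i x => (hasFDerivAt_messagePassing_apply hφ hψ x i).differentiableAt

end MessagePassing

section JacobianBlock

variable {V : Type*} [DecidableEq V] {E : Type*} [NormedAddCommGroup E] [NormedSpace ℝ E]

theorem coordIncl_eq_single (j : V) :
    coordIncl E j = ContinuousLinearMap.single ℝ (fun _ : V => E) j := by
  ext v z
  by_cases h : z = j
  · subst h; simp [coordIncl]
  · simp [coordIncl, h]

noncomputable def jacobianBlock (T : (V → E) →L[ℝ] (V → E)) (i j : V) : E →L[ℝ] E :=
  (ContinuousLinearMap.proj (R := ℝ) (φ := fun _ : V => E) i).comp (T.comp (coordIncl E j))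

theorem jacobianBlock_id (i j : V) :
    jacobianBlock (ContinuousLinearMap.id ℝ (V → E)) i j =
      if i = j then ContinuousLinearMap.id ℝ E else 0 := by
  ext v
  by_cases h : i = j <;> simp [jacobianBlock, coordIncl, h]

theorem norm_jacobianBlock_id_le (i j : V) :
    ‖jacobianBlock (ContinuousLinearMap.id ℝ (V → E)) i j‖ ≤ (1 : Matrix V V ℝ) i j := by
  rw [jacobianBlock_id, Matrix.one_apply]
  split_ifs
  · exact ContinuousLinearMap.norm_id_le
  · rw [norm_zero]

variable [Fintype V]

theorem jacobianBlock_comp (S T : (V → E) →L[ℝ] (V → E)) (i j : V) :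
    jacobianBlock (S.comp T) i j = ∑ z, (jacobianBlock S i z).comp (jacobianBlock T z j) := by
  ext v : 1
  have hS := congrFun
    (ContinuousLinearMap.sum_comp_single ℝ (fun _ : V => E) S (T (coordIncl E j v))) i
  simpa [jacobianBlock, coordIncl_eq_single] using hS.symm

theorem norm_jacobianBlock_comp_le {S T : (V → E) →L[ℝ] (V → E)} {M N : Matrix V V ℝ}
    (hS : ∀ i z, ‖jacobianBlock S i z‖ ≤ M i z) (hT : ∀ z j, ‖jacobianBlock T z j‖ ≤ N z j)
    (i j : V) : ‖jacobianBlock (S.comp T) i j‖ ≤ (M * N) i j := by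
  rw [jacobianBlock_comp, Matrix.mul_apply]
  exact (norm_sum_le _ _).trans <| Finset.sum_le_sum fun z _ =>
    ContinuousLinearMap.norm_comp_le_of_le (hS i z) (hT z j)

theorem norm_jacobianBlock_fderiv_le_pow {F X : ℕ → (V → E) → (V → E)} {M : Matrix V V ℝ}
    (hF : ∀ ℓ, Differentiable ℝ (F ℓ))
    (hFM : ∀ ℓ y i j, ‖jacobianBlock (fderiv ℝ (F ℓ) y) i j‖ ≤ M i j)
    (hX0 : X 0 = id) (hXs : ∀ ℓ, X (ℓ + 1) = F ℓ ∘ X ℓ) (ℓ : ℕ) (x : V → E) (i j : V) :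
    ‖jacobianBlock (fderiv ℝ (X ℓ) x) i j‖ ≤ (M ^ ℓ) i j := by
  have hX : ∀ ℓ, Differentiable ℝ (X ℓ) := by
    intro ℓ
    induction ℓ with
    | zero => exact hX0 ▸ differentiable_id
    | succ ℓ ih => exact hXs ℓ ▸ (hF ℓ).comp ih
  induction ℓ generalizing i j with
  | zero =>
    rw [hX0, fderiv_id, pow_zero]
    exact norm_jacobianBlock_id_le i j
  | succ ℓ ih =>
    rw [hXs, fderiv_comp x (hF ℓ _) (hX ℓ x), pow_succ']
    exact norm_jacobianBlock_comp_le (hFM ℓ _) ih i j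

variable {A : Matrix V V ℝ} {φ ψ : V → E → E}

theorem jacobianBlock_fderiv_messagePassing (hφ : ∀ i, Differentiable ℝ (φ i))
    (hψ : ∀ i, Differentiable ℝ (ψ i)) (x : V → E) (i j : V) :
    jacobianBlock (fderiv ℝ (messagePassing A φ ψ) x) i j =
      A i j • (fderiv ℝ (φ i) (∑ z, A i z • ψ i (x z))).comp (fderiv ℝ (ψ i) (x j)) := by
  have hcoord := hasFDerivAt_pi'.1
    (differentiable_messagePassing (A := A) hφ hψ x).hasFDerivAt i
  rw [jacobianBlock, ← ContinuousLinearMap.comp_assoc,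
    hcoord.unique (hasFDerivAt_messagePassing_apply hφ hψ x i)]
  ext v
  simp [coordIncl_eq_single, Pi.single_apply, apply_ite]

theorem norm_jacobianBlock_fderiv_messagePassing_le (hA : ∀ i j, 0 ≤ A i j) {a b : ℝ}
    (hφ : ∀ i, Differentiable ℝ (φ i)) (hψ : ∀ i, Differentiable ℝ (ψ i))
    (hφa : ∀ i y, ‖fderiv ℝ (φ i) y‖ ≤ a) (hψb : ∀ i y, ‖fderiv ℝ (ψ i) y‖ ≤ b)
    (x : V → E) (i j : V) :
    ‖jacobianBlock (fderiv ℝ (messagePassing A φ ψ) x) i j‖ ≤ ((a * b) • A) i j := by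
  rw [jacobianBlock_fderiv_messagePassing hφ hψ, Matrix.smul_apply, smul_eq_mul, mul_comm,
    norm_smul, Real.norm_of_nonneg (hA i j)]
  exact mul_le_mul_of_nonneg_left
    (ContinuousLinearMap.norm_comp_le_of_le (hφa i _) (hψb i _)) (hA i j)

end JacobianBlock

theorem riemannian_gnn_jacobian_bound_general
    {V : Type*} [Fintype V] [DecidableEq V] {d : ℕ}
    (A : Matrix V V ℝ) (hA : ∀ i j, 0 ≤ A i j)
    (cσ w βE βL : ℝ)
    (σ : EuclideanSpace ℝ (Fin d) → EuclideanSpace ℝ (Fin d))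
    (hσ : Differentiable ℝ σ) (hσ' : ∀ y, ‖fderiv ℝ σ y‖ ≤ cσ)
    (W : ℕ → EuclideanSpace ℝ (Fin d) →L[ℝ] EuclideanSpace ℝ (Fin d))
    (hW : ∀ ℓ, ‖W ℓ‖ ≤ w)
    (E L : V → ℕ → EuclideanSpace ℝ (Fin d) → EuclideanSpace ℝ (Fin d))
    (hE : ∀ i ℓ, Differentiable ℝ (E i ℓ)) (hE' : ∀ i ℓ y, ‖fderiv ℝ (E i ℓ) y‖ ≤ βE)
    (hL : ∀ i ℓ, Differentiable ℝ (L i ℓ)) (hL' : ∀ i ℓ y, ‖fderiv ℝ (L i ℓ) y‖ ≤ βL)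
    (F : ℕ → (V → EuclideanSpace ℝ (Fin d)) → (V → EuclideanSpace ℝ (Fin d)))
    (hF : ∀ ℓ x i, F ℓ x i = σ (E i ℓ (∑ z, A i z • W ℓ (L i ℓ (x z)))))
    (X : ℕ → (V → EuclideanSpace ℝ (Fin d)) → (V → EuclideanSpace ℝ (Fin d)))
    (hX0 : X 0 = id) (hXs : ∀ ℓ, X (ℓ + 1) = F ℓ ∘ X ℓ) :
    ∀ (ℓ : ℕ) (x : V → EuclideanSpace ℝ (Fin d)) (i j : V),
      ‖(ContinuousLinearMap.proj (R := ℝ)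
            (φ := fun _ : V => EuclideanSpace ℝ (Fin d)) i).comp
          ((fderiv ℝ (X ℓ) x).comp (coordIncl (EuclideanSpace ℝ (Fin d)) j))‖ ≤
        cσ ^ ℓ * w ^ ℓ * (βE * βL) ^ ℓ * (A ^ ℓ) i j := by
  have hlayer : ∀ ℓ, F ℓ = messagePassing A (fun i => σ ∘ E i ℓ) (fun i => W ℓ ∘ L i ℓ) :=
    fun ℓ => funext fun x => funext fun i => hF ℓ x i
  have hσE : ∀ ℓ i, Differentiable ℝ (σ ∘ E i ℓ) := fun ℓ i => hσ.comp (hE i ℓ)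
  have hWL : ∀ ℓ i, Differentiable ℝ (W ℓ ∘ L i ℓ) := fun ℓ i =>
    (W ℓ).differentiable.comp (hL i ℓ)
  have hσE' : ∀ ℓ i y, ‖fderiv ℝ (σ ∘ E i ℓ) y‖ ≤ cσ * βE := fun ℓ i y =>
    norm_fderiv_comp_le (hσ _) (hE i ℓ y) (hσ' _) (hE' i ℓ y)
  have hWL' : ∀ ℓ i y, ‖fderiv ℝ (W ℓ ∘ L i ℓ) y‖ ≤ w * βL := fun ℓ i y =>
    norm_fderiv_comp_le (W ℓ).differentiableAt (hL i ℓ y) ((W ℓ).fderiv.symm ▸ hW ℓ) (hL' i ℓ y)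
  have hFdiff : ∀ ℓ, Differentiable ℝ (F ℓ) := fun ℓ => by
    rw [hlayer]
    exact differentiable_messagePassing (hσE ℓ) (hWL ℓ)
  have hFblock : ∀ ℓ y i j,
      ‖jacobianBlock (fderiv ℝ (F ℓ) y) i j‖ ≤ ((cσ * βE * (w * βL)) • A) i j := by
    intro ℓ
    rw [hlayer]
    exact norm_jacobianBlock_fderiv_messagePassing_le hA (hσE ℓ) (hWL ℓ) (hσE' ℓ) (hWL' ℓ)
  intro ℓ x i j
  calc _ ≤ (((cσ * βE * (w * βL)) • A) ^ ℓ) i j :=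
        norm_jacobianBlock_fderiv_le_pow hFdiff hFblock hX0 hXs ℓ x i j
    _ = cσ ^ ℓ * w ^ ℓ * (βE * βL) ^ ℓ * (A ^ ℓ) i j := by
      rw [smul_pow, Matrix.smul_apply, smul_eq_mul]
      ring

/-- Theorem 1 of the paper (sensitivity bound for Riemannian GNNs), with the exponential
and logarithmic maps replaced by arbitrary differentiable maps `E i ℓ`, `L i ℓ` whose
differentials are uniformly bounded in operator norm by `βE`, `βL`. For layer maps
`F ℓ x i = σ (E i ℓ (∑ z, Ã i z • W ℓ (L i ℓ (x z))))` and their compositions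
`X ℓ = F (ℓ-1) ∘ ⋯ ∘ F 0`, the operator norm of the `(i, j)` block
`π_i ∘ D(X ℓ)(x) ∘ ι_j` of the total derivative is at most
`cσ^ℓ * w^ℓ * (βE * βL)^ℓ * (Ã^ℓ) i j`. -/
theorem riemannian_gnn_jacobian_bound
    {V : Type*} [Fintype V] [DecidableEq V] {d m : ℕ} (hd : 1 ≤ d) (hm : 1 ≤ m)
    (A : Matrix V V ℝ) (hA : ∀ i j, 0 ≤ A i j)
    (cσ w βE βL : ℝ) (hcσ : 0 ≤ cσ) (hw : 0 ≤ w) (hβE : 0 ≤ βE) (hβL : 0 ≤ βL)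
    (σ : EuclideanSpace ℝ (Fin d) → EuclideanSpace ℝ (Fin d))
    (hσ : Differentiable ℝ σ) (hσ' : ∀ y, ‖fderiv ℝ σ y‖ ≤ cσ)
    (W : ℕ → EuclideanSpace ℝ (Fin d) →L[ℝ] EuclideanSpace ℝ (Fin d))
    (hW : ∀ ℓ, ‖W ℓ‖ ≤ w)
    (E L : V → ℕ → EuclideanSpace ℝ (Fin d) → EuclideanSpace ℝ (Fin d))
    (hE : ∀ i ℓ, Differentiable ℝ (E i ℓ)) (hE' : ∀ i ℓ y, ‖fderiv ℝ (E i ℓ) y‖ ≤ βE)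
    (hL : ∀ i ℓ, Differentiable ℝ (L i ℓ)) (hL' : ∀ i ℓ y, ‖fderiv ℝ (L i ℓ) y‖ ≤ βL)
    (F : ℕ → (V → EuclideanSpace ℝ (Fin d)) → (V → EuclideanSpace ℝ (Fin d)))
    (hF : ∀ ℓ x i, F ℓ x i = σ (E i ℓ (∑ z, A i z • W ℓ (L i ℓ (x z)))))
    (X : ℕ → (V → EuclideanSpace ℝ (Fin d)) → (V → EuclideanSpace ℝ (Fin d)))
    (hX0 : X 0 = id) (hXs : ∀ ℓ, X (ℓ + 1) = F ℓ ∘ X ℓ) :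
    ∀ (ℓ : ℕ) (x : V → EuclideanSpace ℝ (Fin d)) (i j : V),
      ‖(ContinuousLinearMap.proj (R := ℝ)
            (φ := fun _ : V => EuclideanSpace ℝ (Fin d)) i).comp
          ((fderiv ℝ (X ℓ) x).comp (coordIncl (EuclideanSpace ℝ (Fin d)) j))‖ ≤
        cσ ^ ℓ * w ^ ℓ * (βE * βL) ^ ℓ * (A ^ ℓ) i j :=
  riemannian_gnn_jacobian_bound_general A hA cσ w βE βL σ hσ hσ' W hW E L hE hE' hL hL' F hF X hX0
    hXs
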